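/- arXiv:1308.3593 — 2 statements merged into one kernel-verified Lean document; each statement's English description precedes it below -/
import Mathlib

section
/- Let V be a finite-dimensional normed vector space, A₀ ∈ End(V), and let A : (-∞,0] → End(V) be continuous. Let E solve the initial value problem E'(t) = A(t)·E(t), E(0) = id, on (-∞,0]. Fix ε > 0 and let ℓ = ℓ(A₀), M = M(A₀,ε) := sup_{t≤0}‖exp(t(A₀-ℓ+ε))‖. Then for all t ≤ 0, ‖E(t)‖ ≤ M · exp( t·( ℓ - ε - M · sup_{s≤0} ‖A(s) - A₀‖ ) ). -/
/-!
Variation of constants against the unperturbed flow gives Duhamel's formula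
`E t = exp (t A₀) - ∫_t^0 exp ((t - s) A₀) (A s - A₀) E s ds`. Writing
`A₀ = (A₀ - ℓ + ε) + (ℓ - ε)` shows `‖exp (τ A₀)‖ ≤ M e^{τ (ℓ - ε)}` for `τ ≤ 0`, so the weighted
norm `v t = e^{-t (ℓ - ε)} ‖E t‖` satisfies `v t ≤ M + M K ∫_t^0 v`, and Grönwall's inequality,
run backwards in time, yields `v t ≤ M e^{-M K t}`.
-/

open Set NormedSpace

theorem add_mul_gronwallBound_zero (K ε x : ℝ) :
    ε + K * gronwallBound 0 K ε x = ε * Real.exp (K * x) := by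
  rcases eq_or_ne K 0 with rfl | hK
  · simp
  · rw [gronwallBound_of_K_ne_0 hK]
    field_simp
    ring

theorem le_mul_exp_of_le_add_mul_integral {u : ℝ → ℝ} {C L a : ℝ} (hL : 0 ≤ L)
    (hu : ContinuousOn u (Ici a)) (h : ∀ x, a ≤ x → u x ≤ C + L * ∫ s in a..x, u s) :
    ∀ x, a ≤ x → u x ≤ C * Real.exp (L * (x - a)) := by
  intro x hx
  have hu_Icc : ∀ y, a ≤ y → ContinuousOn u (uIcc a y) := fun y hy =>
    hu.mono (uIcc_of_le hy ▸ Icc_subset_Ici_self)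
  have hderiv : ∀ y ∈ Ico a x,
      HasDerivWithinAt (fun z => ∫ s in a..z, u s) (u y) (Ici y) y := fun y hy =>
    intervalIntegral.integral_hasDerivWithinAt_right ((hu_Icc y hy.1).intervalIntegrable)
      ((hu.mono (Ioi_subset_Ici hy.1)).stronglyMeasurableAtFilter_nhdsWithin measurableSet_Ioi y)
      ((hu y hy.1).mono (Ioi_subset_Ici hy.1))
  have hprim : ∫ s in a..x, u s ≤ gronwallBound 0 L C (x - a) :=
    le_gronwallBound_of_liminf_deriv_right_le
      (uIcc_of_le hx ▸ intervalIntegral.continuousOn_primitive_interval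
        ((hu_Icc x hx).integrableOn_compact isCompact_uIcc))
      (fun y hy _ hr => (hderiv y hy).liminf_right_slope_le hr) (by simp)
      (fun y hy => by linarith [h y hy.1]) x ⟨hx, le_rfl⟩
  calc u x ≤ C + L * ∫ s in a..x, u s := h x hx
    _ ≤ C + L * gronwallBound 0 L C (x - a) := by gcongr
    _ = C * Real.exp (L * (x - a)) := add_mul_gronwallBound_zero L C _

theorem le_mul_exp_of_le_add_mul_integral_Iic {v : ℝ → ℝ} {C L b : ℝ} (hL : 0 ≤ L)
    (hv : ContinuousOn v (Iic b)) (h : ∀ t ≤ b, v t ≤ C + L * ∫ s in t..b, v s) :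
    ∀ t ≤ b, v t ≤ C * Real.exp (L * (b - t)) := by
  intro t ht
  have key := le_mul_exp_of_le_add_mul_integral (u := fun x => v (-x)) (a := -b) hL
    (hv.comp continuous_neg.continuousOn fun x (hx : -b ≤ x) => show -x ≤ b from neg_le.1 hx)
    (fun x hx => by
      rw [intervalIntegral.integral_comp_neg (fun s => v s), neg_neg]
      exact h (-x) (neg_le.1 hx))
    (-t) (neg_le_neg ht)
  simpa [sub_eq_add_neg, add_comm] using key

section RealBanachAlgebra

variable {𝔸 : Type*} [NormedRing 𝔸] [NormedAlgebra ℝ 𝔸] [CompleteSpace 𝔸]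

theorem hasDerivAt_exp_sub_smul (A₀ : 𝔸) (t s : ℝ) :
    HasDerivAt (fun σ : ℝ => exp ((t - σ) • A₀)) (-(A₀ * exp ((t - s) • A₀))) s := by
  simpa [Function.comp_def] using
    (hasDerivAt_exp_smul_const' A₀ (t - s)).scomp s ((hasDerivAt_id s).const_sub t)

theorem eq_exp_smul_mul_sub_integral {A E : ℝ → 𝔸} {A₀ : 𝔸} {t b : ℝ} (htb : t ≤ b)
    (hA : ContinuousOn A (Icc t b)) (hE : ∀ s ∈ Icc t b, HasDerivAt E (A s * E s) s) :
    E t = exp ((t - b) • A₀) * E b -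
      ∫ s in t..b, exp ((t - s) • A₀) * ((A s - A₀) * E s) := by
  -- the Banach-algebra API for `exp` (`exp_continuous`, `exp_add_of_commute`) asks for `ℚ`-scalars
  let +nondep := NormedAlgebra.restrictScalars ℚ ℝ 𝔸
  have hderiv : ∀ s ∈ uIcc t b, HasDerivAt (fun σ => exp ((t - σ) • A₀) * E σ)
      (exp ((t - s) • A₀) * ((A s - A₀) * E s)) s := by
    intro s hs
    rw [uIcc_of_le htb] at hs
    refine ((hasDerivAt_exp_sub_smul A₀ t s).mul (hE s hs)).congr_deriv ?_
    rw [← ((Commute.refl A₀).smul_left (t - s)).exp_left.eq]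
    noncomm_ring
  have hcont : ContinuousOn (fun s => exp ((t - s) • A₀) * ((A s - A₀) * E s)) (uIcc t b) := by
    rw [uIcc_of_le htb]
    exact (exp_continuous.comp (by fun_prop)).continuousOn.mul
      ((hA.sub continuousOn_const).mul fun s hs => (hE s hs).continuousAt.continuousWithinAt)
  rw [intervalIntegral.integral_eq_sub_of_hasDerivAt hderiv hcont.intervalIntegrable]
  simp

variable {A E : ℝ → 𝔸} {A₀ : 𝔸} {M K r : ℝ}

theorem exp_mul_norm_le_add_integral (hA : ContinuousOn A (Iic 0)) (hE0 : E 0 = 1)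
    (hE : ∀ t ≤ 0, HasDerivAt E (A t * E t) t)
    (hexp : ∀ τ ≤ 0, ‖exp (τ • A₀)‖ ≤ M * Real.exp (τ * r)) (hK : ∀ s ≤ 0, ‖A s - A₀‖ ≤ K) :
    ∀ t ≤ 0, Real.exp (-(t * r)) * ‖E t‖ ≤
      M + M * K * ∫ s in t..0, Real.exp (-(s * r)) * ‖E s‖ := by
  intro t ht
  have hM : 0 ≤ M := by simpa using (norm_nonneg _).trans (hexp 0 le_rfl)
  have hEcont : ContinuousOn E (Icc t 0) := fun s hs =>
    (hE s hs.2).continuousAt.continuousWithinAt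
  have hduhamel := eq_exp_smul_mul_sub_integral (A₀ := A₀) ht (hA.mono Icc_subset_Iic_self)
    fun s hs => hE s hs.2
  rw [hE0, sub_zero, mul_one] at hduhamel
  have hintegrand : ∀ s ∈ Ioc t 0, ‖exp ((t - s) • A₀) * ((A s - A₀) * E s)‖ ≤
      Real.exp (t * r) * (M * K * (Real.exp (-(s * r)) * ‖E s‖)) := by
    intro s hs
    calc ‖exp ((t - s) • A₀) * ((A s - A₀) * E s)‖
        ≤ ‖exp ((t - s) • A₀)‖ * (‖A s - A₀‖ * ‖E s‖) :=
          (norm_mul_le _ _).trans (by gcongr; exact norm_mul_le _ _)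
      _ ≤ M * Real.exp ((t - s) * r) * (K * ‖E s‖) := by
          gcongr
          · exact hexp _ (by linarith [hs.1])
          · exact hK s hs.2
      _ = Real.exp (t * r) * (M * K * (Real.exp (-(s * r)) * ‖E s‖)) := by
          rw [sub_mul, sub_eq_add_neg, Real.exp_add, ← neg_mul]
          ring
  have hbound : ‖E t‖ ≤ Real.exp (t * r) *
      (M + M * K * ∫ s in t..0, Real.exp (-(s * r)) * ‖E s‖) := by
    rw [hduhamel, mul_add, ← intervalIntegral.integral_const_mul,
      ← intervalIntegral.integral_const_mul]
    refine (norm_sub_le _ _).trans (add_le_add ((hexp t ht).trans_eq (mul_comm _ _)) ?_)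
    refine intervalIntegral.norm_integral_le_of_norm_le ht
      (MeasureTheory.ae_of_all _ hintegrand) (ContinuousOn.intervalIntegrable ?_)
    rw [uIcc_of_le ht]
    fun_prop
  calc Real.exp (-(t * r)) * ‖E t‖
      ≤ Real.exp (-(t * r)) * (Real.exp (t * r) *
          (M + M * K * ∫ s in t..0, Real.exp (-(s * r)) * ‖E s‖)) := by gcongr
    _ = M + M * K * ∫ s in t..0, Real.exp (-(s * r)) * ‖E s‖ := by
      rw [← mul_assoc, ← Real.exp_add, neg_add_cancel, Real.exp_zero, one_mul]

theorem norm_le_mul_exp_of_norm_exp_smul_le (hA : ContinuousOn A (Iic 0)) (hE0 : E 0 = 1)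
    (hE : ∀ t ≤ 0, HasDerivAt E (A t * E t) t)
    (hexp : ∀ τ ≤ 0, ‖exp (τ • A₀)‖ ≤ M * Real.exp (τ * r)) (hK : ∀ s ≤ 0, ‖A s - A₀‖ ≤ K) :
    ∀ t ≤ 0, ‖E t‖ ≤ M * Real.exp (t * (r - M * K)) := by
  intro t ht
  have hM : 0 ≤ M := by simpa using (norm_nonneg _).trans (hexp 0 le_rfl)
  have hK0 : 0 ≤ K := (norm_nonneg _).trans (hK 0 le_rfl)
  have hEcont : ContinuousOn E (Iic 0) := fun s hs => (hE s hs).continuousAt.continuousWithinAt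
  have hweighted := le_mul_exp_of_le_add_mul_integral_Iic (mul_nonneg hM hK0) (by fun_prop)
    (exp_mul_norm_le_add_integral hA hE0 hE hexp hK) t ht
  calc ‖E t‖ = Real.exp (t * r) * (Real.exp (-(t * r)) * ‖E t‖) := by
        rw [← mul_assoc, ← Real.exp_add, add_neg_cancel, Real.exp_zero, one_mul]
    _ ≤ Real.exp (t * r) * (M * Real.exp (M * K * (0 - t))) := by gcongr
    _ = M * Real.exp (t * (r - M * K)) := by
        rw [mul_left_comm, ← Real.exp_add]
        ring_nf

end RealBanachAlgebra

section ComplexBanachAlgebra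

variable {𝔸 : Type*} [NormedRing 𝔸] [NormedAlgebra ℂ 𝔸] [CompleteSpace 𝔸]

theorem norm_exp_smul_add_smul_one (B : 𝔸) (τ c : ℝ) :
    ‖exp (τ • (B + (c : ℂ) • (1 : 𝔸)))‖ = Real.exp (τ * c) * ‖exp (τ • B)‖ := by
  let +nondep := NormedAlgebra.restrictScalars ℚ ℂ 𝔸
  have hsplit : τ • (B + (c : ℂ) • (1 : 𝔸)) = τ • B + algebraMap ℂ 𝔸 ((τ * c : ℝ) : ℂ) := by
    rw [Algebra.algebraMap_eq_smul_one, smul_add, ← smul_assoc, Complex.real_smul,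
      Complex.ofReal_mul]
  rw [hsplit, exp_add_of_commute (Algebra.commute_algebraMap_right _ _), ← algebraMap_exp_comm,
    Algebra.algebraMap_eq_smul_one, mul_smul_one, norm_smul, ← Complex.exp_eq_exp_ℂ,
    Complex.norm_exp_ofReal]

end ComplexBanachAlgebra

theorem stmt2_general {V : Type*} [NormedAddCommGroup V] [NormedSpace ℂ V]
    [FiniteDimensional ℂ V] (A₀ : V →L[ℂ] V)
    (A : ℝ → (V →L[ℂ] V)) (hA : ContinuousOn A (Set.Iic 0))
    (E : ℝ → (V →L[ℂ] V)) (hE0 : E 0 = 1)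
    (hE : ∀ t ≤ (0:ℝ), HasDerivAt E (A t * E t) t)
    (ℓ : ℝ)
    (ε : ℝ)
    (M : ℝ)
    (hMbdd : BddAbove ((fun t : ℝ =>
      ‖NormedSpace.exp (t • (A₀ - (ℓ : ℂ) • (1 : V →L[ℂ] V) + (ε : ℂ) • (1 : V →L[ℂ] V)))‖)
        '' Set.Iic 0))
    (hM : M = sSup ((fun t : ℝ =>
      ‖NormedSpace.exp (t • (A₀ - (ℓ : ℂ) • (1 : V →L[ℂ] V) + (ε : ℂ) • (1 : V →L[ℂ] V)))‖)
        '' Set.Iic 0))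
    (K : ℝ)
    (hKbdd : BddAbove ((fun s : ℝ => ‖A s - A₀‖) '' Set.Iic 0))
    (hK : K = sSup ((fun s : ℝ => ‖A s - A₀‖) '' Set.Iic 0)) :
    ∀ t ≤ (0:ℝ), ‖E t‖ ≤ M * Real.exp (t * (ℓ - ε - M * K)) := by
  have : CompleteSpace V := FiniteDimensional.complete ℂ V
  have hexp : ∀ τ ≤ (0:ℝ), ‖exp (τ • A₀)‖ ≤ M * Real.exp (τ * (ℓ - ε)) := by
    intro τ hτ
    calc ‖exp (τ • A₀)‖
        = Real.exp (τ * (ℓ - ε)) *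
          ‖exp (τ • (A₀ - (ℓ : ℂ) • (1 : V →L[ℂ] V) + (ε : ℂ) • (1 : V →L[ℂ] V)))‖ := by
          rw [← norm_exp_smul_add_smul_one
            (A₀ - (ℓ : ℂ) • (1 : V →L[ℂ] V) + (ε : ℂ) • (1 : V →L[ℂ] V)) τ (ℓ - ε)]
          congr 3
          push_cast
          module
      _ ≤ M * Real.exp (τ * (ℓ - ε)) := by
          rw [mul_comm]
          gcongr
          exact hM ▸ le_csSup hMbdd ⟨τ, hτ, rfl⟩
  exact norm_le_mul_exp_of_norm_exp_smul_le hA hE0 hE hexp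
    fun s hs => hK ▸ le_csSup hKbdd ⟨s, hs, rfl⟩

/-- Perturbation estimate: if `E' = A(t)E`, `E(0) = id` on `(-∞,0]`, `ℓ = ℓ(A₀)` is the
minimal real part of the spectrum of `A₀`, `M = sup_{t≤0} ‖exp(t(A₀-ℓ+ε))‖` and
`K = sup_{s≤0} ‖A(s)-A₀‖`, then `‖E(t)‖ ≤ M·exp(t(ℓ - ε - M·K))` for all `t ≤ 0`. -/
theorem stmt2 {V : Type*} [NormedAddCommGroup V] [NormedSpace ℂ V]
    [FiniteDimensional ℂ V] (A₀ : V →L[ℂ] V)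
    (A : ℝ → (V →L[ℂ] V)) (hA : ContinuousOn A (Set.Iic 0))
    (E : ℝ → (V →L[ℂ] V)) (hE0 : E 0 = 1)
    (hE : ∀ t ≤ (0:ℝ), HasDerivAt E (A t * E t) t)
    (ℓ : ℝ) (hℓ : ℓ = sInf (Complex.re '' spectrum ℂ A₀))
    (ε : ℝ) (hε : 0 < ε)
    (M : ℝ)
    (hMbdd : BddAbove ((fun t : ℝ =>
      ‖NormedSpace.exp (t • (A₀ - (ℓ : ℂ) • (1 : V →L[ℂ] V) + (ε : ℂ) • (1 : V →L[ℂ] V)))‖)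
        '' Set.Iic 0))
    (hM : M = sSup ((fun t : ℝ =>
      ‖NormedSpace.exp (t • (A₀ - (ℓ : ℂ) • (1 : V →L[ℂ] V) + (ε : ℂ) • (1 : V →L[ℂ] V)))‖)
        '' Set.Iic 0))
    (K : ℝ)
    (hKbdd : BddAbove ((fun s : ℝ => ‖A s - A₀‖) '' Set.Iic 0))
    (hK : K = sSup ((fun s : ℝ => ‖A s - A₀‖) '' Set.Iic 0)) :
    ∀ t ≤ (0:ℝ), ‖E t‖ ≤ M * Real.exp (t * (ℓ - ε - M * K)) :=
  stmt2_general A₀ A hA E hE0 hE ℓ ε M hMbdd hM K hKbdd hK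
end

section
/- Let X be a smooth vector field on open U ⊆ ℝⁿ with strictly positive source at 0, U star-shaped with respect to X, A : U → End(V) smooth, and suppose w : U → V is a smooth solution of D_X w + A·w = 0 that is flat at 0. Then w ≡ 0 on U. -/
open Filter Set Metric


lemma euclid_norm_sq {n : ℕ} (v : Fin n → ℝ) :
    ‖((WithLp.equiv 2 (Fin n → ℂ)).symm (fun i => (v i : ℂ)))‖ ^ 2 = ∑ i, v i ^ 2 := by
  rw [EuclideanSpace.norm_eq,
    Real.sq_sqrt (Finset.sum_nonneg fun i _ => sq_nonneg _)]
  refine Finset.sum_congr rfl fun i _ => ?_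
  rw [show ((WithLp.equiv 2 (Fin n → ℂ)).symm fun i => (v i : ℂ)).ofLp i = (v i : ℂ) from rfl,
    Complex.norm_real]
  exact sq_abs (v i)

private lemma num_bound {h lam R x y : ℝ} (hhe : h * (R ^ 2 + 1) = lam) (hhpos : 0 < h)
    (hre : lam ≤ x) (hnrm : x ^ 2 + y ^ 2 ≤ R ^ 2) :
    1 - 2 * h * x + h ^ 2 * (x ^ 2 + y ^ 2) ≤ 1 - h * lam := by
  nlinarith [sq_nonneg h, sq_nonneg R, hhpos.le]

set_option maxHeartbeats 1600000 in
lemma spectral_contraction {n : ℕ} (B : Matrix (Fin n) (Fin n) ℝ)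
    (hpos : ∀ μ ∈ spectrum ℂ (B.map (Complex.ofReal ·)), 0 < μ.re) :
    ∃ (h : ℝ) (k₀ : ℕ) (r : ℝ), 0 < h ∧ 0 ≤ r ∧ r < 1 ∧ 0 < k₀ ∧
      ∀ x : Fin n → ℝ,
        ∑ i, ((((1 : Matrix (Fin n) (Fin n) ℝ) - h • B) ^ k₀).mulVec x i) ^ 2
          ≤ r ^ 2 * ∑ i, (x i) ^ 2 := by
  rcases Nat.eq_zero_or_pos n with hn | hn
  · subst hn
    exact ⟨1, 1, 1/2, by norm_num, by norm_num, by norm_num, by norm_num,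
      fun x => by simp⟩
  haveI : Nonempty (Fin n) := Fin.pos_iff_nonempty.mp hn
  set Mc : Matrix (Fin n) (Fin n) ℂ := B.map (Complex.ofReal ·) with hMc
  set T := Matrix.toEuclideanCLM (𝕜 := ℂ) Mc with hT
  have hspecT : spectrum ℂ T = spectrum ℂ Mc := AlgEquiv.spectrum_eq _ _
  have hScpt : IsCompact (spectrum ℂ T) := spectrum.isCompact T
  have hSne : (spectrum ℂ T).Nonempty := spectrum.nonempty T
  obtain ⟨μ₁, hμ₁S, hμ₁min⟩ := hScpt.exists_isMinOn hSne
    (Complex.continuous_re.continuousOn)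
  obtain ⟨μ₂, hμ₂S, hμ₂max⟩ := hScpt.exists_isMaxOn hSne
    (continuous_norm.continuousOn)
  set lam : ℝ := μ₁.re with hlam
  set R : ℝ := ‖μ₂‖ with hR
  have hlampos : 0 < lam := hpos μ₁ (hspecT ▸ hμ₁S)
  have hlamR : lam ≤ R := by
    calc lam ≤ |μ₁.re| := le_abs_self _
    _ ≤ ‖μ₁‖ := Complex.abs_re_le_norm μ₁
    _ ≤ R := hμ₂max hμ₁S
  have hRpos : 0 < R := lt_of_lt_of_le hlampos hlamR
  set h : ℝ := lam / (R ^ 2 + 1) with hh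
  have hhpos : 0 < h := by positivity
  have hr2 : 0 ≤ 1 - h * lam := by
    have : h * lam ≤ 1 := by
      rw [hh]; rw [div_mul_eq_mul_div, div_le_one (by positivity)]
      nlinarith
    linarith
  set r : ℝ := Real.sqrt (1 - h * lam) with hr
  have hr0 : 0 ≤ r := Real.sqrt_nonneg _
  have hrlt : r < 1 := by
    rw [hr]
    have : 1 - h * lam < 1 := by nlinarith
    calc Real.sqrt (1 - h * lam) < Real.sqrt 1 := by
          apply Real.sqrt_lt_sqrt hr2 (by linarith)
    _ = 1 := Real.sqrt_one
  -- key : every ν in spectrum of a := 1 - h • T has norm ≤ r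
  set a : EuclideanSpace ℂ (Fin n) →L[ℂ] EuclideanSpace ℂ (Fin n) := 1 - (h : ℂ) • T with ha
  have hspec_a : ∀ ν ∈ spectrum ℂ a, ‖ν‖ ≤ r := by
    intro ν hν
    -- μ := (1 - ν)/h is in spectrum of T
    set μ : ℂ := (1 - ν) / (h : ℂ) with hμ
    have hne : (h : ℂ) ≠ 0 := by exact_mod_cast hhpos.ne'
    have hμmem : μ ∈ spectrum ℂ T := by
      by_contra hcon
      have hunit : IsUnit (algebraMap ℂ _ μ - T) := not_not.mp (fun hh2 => hcon hh2)
      have : IsUnit (algebraMap ℂ _ ν - a) := by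
        have key : algebraMap ℂ (EuclideanSpace ℂ (Fin n) →L[ℂ] EuclideanSpace ℂ (Fin n)) ν - a
            = -((h : ℂ) • (algebraMap ℂ _ μ - T)) := by
          rw [Algebra.algebraMap_eq_smul_one, Algebra.algebraMap_eq_smul_one, ha, hμ]
          rw [smul_sub, smul_smul, mul_div_cancel₀ _ hne]
          module
        have hu2 : IsUnit ((h : ℂ) • (algebraMap ℂ
            (EuclideanSpace ℂ (Fin n) →L[ℂ] EuclideanSpace ℂ (Fin n)) μ - T)) := by
          have heq2 : ((h:ℂ) • (algebraMap ℂ (EuclideanSpace ℂ (Fin n) →L[ℂ]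
              EuclideanSpace ℂ (Fin n)) μ - T)) = ((h:ℂ) • 1) * (algebraMap ℂ _ μ - T) := by
            rw [smul_mul_assoc, one_mul]
          rw [heq2]
          refine IsUnit.mul ?_ hunit
          have h1 : ((h:ℂ) • (1 : EuclideanSpace ℂ (Fin n) →L[ℂ] EuclideanSpace ℂ (Fin n)))
              = algebraMap ℂ _ (h:ℂ) := (Algebra.algebraMap_eq_smul_one _).symm
          rw [h1]
          exact (isUnit_iff_ne_zero.mpr hne).map (algebraMap ℂ _)
        exact key ▸ hu2.neg
      exact (spectrum.mem_iff.mp hν) this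
    have hνeq : ν = 1 - (h : ℂ) * μ := by
      rw [hμ, mul_div_cancel₀ _ hne]; ring
    have hμMc : μ ∈ spectrum ℂ Mc := hspecT ▸ hμmem
    have hre : lam ≤ μ.re := hμ₁min (hspecT ▸ hμMc)
    have hnrm : ‖μ‖ ≤ R := hμ₂max (hspecT ▸ hμMc)
    have habs2 : ‖μ‖ ^ 2 = μ.re ^ 2 + μ.im ^ 2 := by
      rw [Complex.sq_norm, Complex.normSq_apply]; ring
    have hnν2 : ‖ν‖ ^ 2 = 1 - 2 * h * μ.re + h ^ 2 * (μ.re ^ 2 + μ.im ^ 2) := by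
      rw [hνeq, Complex.sq_norm, Complex.normSq_apply]
      simp only [Complex.sub_re, Complex.sub_im, Complex.mul_re, Complex.mul_im,
        Complex.ofReal_re, Complex.ofReal_im, Complex.one_re, Complex.one_im]
      ring
    have hhe : h * (R ^ 2 + 1) = lam := by
      rw [hh]; field_simp
    have hnrm2 : μ.re ^ 2 + μ.im ^ 2 ≤ R ^ 2 := by
      rw [← habs2]
      have := pow_le_pow_left₀ (norm_nonneg μ) hnrm 2
      simpa using this
    have hb : ‖ν‖ ^ 2 ≤ r ^ 2 := by
      rw [hnν2, hr, Real.sq_sqrt hr2]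
      exact num_bound hhe hhpos hre hnrm2
    have := Real.sqrt_le_sqrt hb
    rwa [Real.sqrt_sq (norm_nonneg ν), Real.sqrt_sq hr0] at this
  -- spectral radius bound
  set rnn : NNReal := ⟨r, hr0⟩ with hrnn
  have hsr : spectralRadius ℂ a ≤ (rnn : ENNReal) := by
    rw [spectralRadius]
    refine iSup₂_le fun ν hν => ?_
    have h1 : ‖ν‖₊ ≤ rnn := by
      have := hspec_a ν hν
      exact_mod_cast this
    exact_mod_cast ENNReal.coe_le_coe.mpr h1
  have hrlt' : (0:ℝ) < (1 + r) / 2 ∧ (1 + r) / 2 < 1 := by constructor <;> linarith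
  set rnn' : NNReal := ⟨(1 + r) / 2, hrlt'.1.le⟩ with hrnn'
  have hlt2 : spectralRadius ℂ a < (rnn' : ENNReal) := by
    refine lt_of_le_of_lt hsr ?_
    rw [ENNReal.coe_lt_coe]
    rw [← NNReal.coe_lt_coe]
    show r < (1 + r) / 2
    linarith
  have hev := (spectrum.pow_nnnorm_pow_one_div_tendsto_nhds_spectralRadius a).eventually_lt_const
      hlt2
  obtain ⟨k₀, hk1, hk2⟩ := (hev.and (Filter.eventually_ge_atTop 1)).exists
  have hk0ne : (k₀ : ℝ) ≠ 0 := by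
    have : (1:ℕ) ≤ k₀ := hk2
    positivity
  have hpow : ‖a ^ k₀‖ ≤ ((1 + r) / 2) ^ k₀ := by
    have h1 : (((‖a ^ k₀‖₊ : ENNReal) ^ (1 / (k₀:ℝ))) ^ (k₀:ℝ))
        ≤ ((rnn' : ENNReal)) ^ (k₀:ℝ) := ENNReal.rpow_le_rpow hk1.le (by positivity)
    rw [← ENNReal.rpow_mul, one_div, inv_mul_cancel₀ hk0ne, ENNReal.rpow_one,
      ENNReal.rpow_natCast, ← ENNReal.coe_pow, ENNReal.coe_le_coe] at h1
    have := NNReal.coe_le_coe.mpr h1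
    rw [NNReal.coe_pow] at this
    exact_mod_cast this
  refine ⟨h, k₀, ((1 + r) / 2) ^ k₀, hhpos, by positivity, ?_, hk2, ?_⟩
  · exact pow_lt_one₀ hrlt'.1.le hrlt'.2 (by omega)
  -- vector inequality
  intro x
  set Cr : Matrix (Fin n) (Fin n) ℝ := 1 - h • B with hCr
  have hcast : ∀ (M : Matrix (Fin n) (Fin n) ℝ),
      M.map (Complex.ofReal ·) = (algebraMap ℝ ℂ).mapMatrix M := by
    intro M; ext i j; simp [RingHom.mapMatrix_apply, Matrix.map_apply]
  have hCc : ((1 : Matrix (Fin n) (Fin n) ℂ) - (h:ℂ) • Mc) = Cr.map (Complex.ofReal ·) := by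
    ext i j
    by_cases hij : i = j <;>
      simp [hCr, hij, Matrix.one_apply, Matrix.map_apply, hMc] <;> push_cast <;> ring
  have hmm : (Cr.map (Complex.ofReal ·)) ^ k₀ = (Cr ^ k₀).map (Complex.ofReal ·) := by
    rw [hcast, hcast, map_pow]
  have haC : a ^ k₀ = Matrix.toEuclideanCLM (𝕜:=ℂ) ((Cr ^ k₀).map (Complex.ofReal ·)) := by
    rw [← hmm, ← hCc, ha, hT, map_pow]
    congr 1
    rw [map_sub, map_one, map_smul]
  have hmv : ((Cr ^ k₀).map (Complex.ofReal ·)).mulVec (fun i => (x i : ℂ))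
      = fun i => (((Cr ^ k₀).mulVec x i : ℝ) : ℂ) := by
    funext i
    simp only [Matrix.mulVec, dotProduct, Matrix.map_apply]
    push_cast
    rfl
  set z : EuclideanSpace ℂ (Fin n) := (WithLp.equiv 2 _).symm (fun i => (x i : ℂ)) with hz
  have happ : (a ^ k₀) z = (WithLp.equiv 2 _).symm
      (fun i => (((Cr ^ k₀).mulVec x i : ℝ) : ℂ)) := by
    rw [haC, hz, ← hmv]; rfl
  have hnormz : ‖z‖ ^ 2 = ∑ i, x i ^ 2 := euclid_norm_sq x
  have hnormu : ‖(a ^ k₀) z‖ ^ 2 = ∑ i, ((Cr ^ k₀).mulVec x i) ^ 2 := by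
    rw [happ]; exact euclid_norm_sq _
  have hineq : ‖(a ^ k₀) z‖ ≤ ((1 + r) / 2) ^ k₀ * ‖z‖ := by
    calc ‖(a ^ k₀) z‖ ≤ ‖a ^ k₀‖ * ‖z‖ := (a ^ k₀).le_opNorm z
    _ ≤ ((1 + r) / 2) ^ k₀ * ‖z‖ := by
        exact mul_le_mul_of_nonneg_right hpow (norm_nonneg z)
  have hsq := pow_le_pow_left₀ (norm_nonneg _) hineq 2
  rw [mul_pow, hnormu, hnormz] at hsq
  exact hsq


lemma pi_norm_sq_le_sum_sq {n : ℕ} (x : Fin n → ℝ) : ‖x‖ ^ 2 ≤ ∑ i, x i ^ 2 := by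
  have h1 : ‖x‖ ≤ Real.sqrt (∑ i, x i ^ 2) := by
    rw [pi_norm_le_iff_of_nonneg (Real.sqrt_nonneg _)]
    intro i
    have h2 : x i ^ 2 ≤ ∑ j, x j ^ 2 :=
      Finset.single_le_sum (f := fun j => x j ^ 2) (fun j _ => sq_nonneg _) (Finset.mem_univ i)
    calc ‖x i‖ = Real.sqrt (x i ^ 2) := by
          rw [Real.sqrt_sq_eq_abs, Real.norm_eq_abs]
    _ ≤ _ := Real.sqrt_le_sqrt h2
  calc ‖x‖ ^ 2 ≤ Real.sqrt (∑ i, x i ^ 2) ^ 2 := by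
        exact pow_le_pow_left₀ (norm_nonneg _) h1 2
  _ = ∑ i, x i ^ 2 := Real.sq_sqrt (Finset.sum_nonneg fun i _ => sq_nonneg _)

lemma sum_sq_le_pi_norm_sq {n : ℕ} (x : Fin n → ℝ) : ∑ i, x i ^ 2 ≤ n * ‖x‖ ^ 2 := by
  calc ∑ i, x i ^ 2 ≤ ∑ _i : Fin n, ‖x‖ ^ 2 := by
        refine Finset.sum_le_sum fun i _ => ?_
        have h1 : ‖x i‖ ≤ ‖x‖ := norm_le_pi_norm x i
        calc x i ^ 2 = ‖x i‖ ^ 2 := by rw [Real.norm_eq_abs, sq_abs]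
        _ ≤ ‖x‖ ^ 2 := pow_le_pow_left₀ (norm_nonneg _) h1 2
  _ = n * ‖x‖ ^ 2 := by simp [Finset.sum_const, Finset.card_univ]

set_option maxHeartbeats 1600000 in
lemma lyapunov {n : ℕ} (B : Matrix (Fin n) (Fin n) ℝ)
    (hpos : ∀ μ ∈ spectrum ℂ (B.map (Complex.ofReal ·)), 0 < μ.re) :
    ∃ (bil : (Fin n → ℝ) → (Fin n → ℝ) → ℝ) (c ε : ℝ), 0 < c ∧ 0 < ε ∧
      (∀ x, 0 ≤ bil x x) ∧
      (∀ x, ‖x‖ ^ 2 ≤ bil x x) ∧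
      (∀ x g, ‖g‖ ≤ ε * ‖x‖ → c * bil x x ≤ 2 * bil x (B.mulVec x + g)) ∧
      (∀ (ψ : ℝ → (Fin n → ℝ)) (d : Fin n → ℝ) (t : ℝ), HasDerivAt ψ d t →
        HasDerivAt (fun s => bil (ψ s) (ψ s)) (2 * bil (ψ t) d) t) := by
  obtain ⟨h, k₀, r, hh, hr0, hr1, hk₀, hkey⟩ := spectral_contraction B hpos
  set C : Matrix (Fin n) (Fin n) ℝ := 1 - h • B with hC
  set bil : (Fin n → ℝ) → (Fin n → ℝ) → ℝ :=
    fun x y => ∑ k ∈ Finset.range k₀, ∑ i, ((C ^ k).mulVec x i) * ((C ^ k).mulVec y i) with hbil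
  -- basic bilinearity
  have hadd : ∀ x y z, bil x (y + z) = bil x y + bil x z := by
    intro x y z
    rw [hbil]
    simp only [Matrix.mulVec_add, Pi.add_apply]
    rw [← Finset.sum_add_distrib]
    refine Finset.sum_congr rfl fun k _ => ?_
    rw [← Finset.sum_add_distrib]
    exact Finset.sum_congr rfl fun i _ => by ring
  have hsymm : ∀ x y, bil x y = bil y x := by
    intro x y
    exact Finset.sum_congr rfl fun k _ => Finset.sum_congr rfl fun i _ => mul_comm _ _
  have hposq : ∀ x, 0 ≤ bil x x := by
    intro x
    refine Finset.sum_nonneg fun k _ => Finset.sum_nonneg fun i _ => mul_self_nonneg _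
  have hsumlow : ∀ x, ∑ i, x i ^ 2 ≤ bil x x := by
    intro x
    have h0 : (0 : ℕ) ∈ Finset.range k₀ := Finset.mem_range.mpr hk₀
    have := Finset.single_le_sum
      (f := fun k => ∑ i, ((C ^ k).mulVec x i) * ((C ^ k).mulVec x i))
      (fun k _ => Finset.sum_nonneg fun i _ => mul_self_nonneg _) h0
    calc ∑ i, x i ^ 2 = ∑ i, ((C ^ 0).mulVec x i) * ((C ^ 0).mulVec x i) := by
          simp [pow_zero, Matrix.one_mulVec, sq]
    _ ≤ bil x x := this
  have hlow : ∀ x, ‖x‖ ^ 2 ≤ bil x x :=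
    fun x => le_trans (pi_norm_sq_le_sum_sq x) (hsumlow x)
  -- upper bound via Cauchy-Schwarz
  set L : ℝ := ∑ k ∈ Finset.range k₀, ∑ i, ∑ j, ((C ^ k) i j) ^ 2 with hL
  have hLnn : 0 ≤ L := Finset.sum_nonneg fun k _ => Finset.sum_nonneg fun i _ =>
    Finset.sum_nonneg fun j _ => sq_nonneg _
  have hup0 : ∀ x, bil x x ≤ L * ∑ i, x i ^ 2 := by
    intro x
    rw [hbil, hL, Finset.sum_mul]
    refine Finset.sum_le_sum fun k _ => ?_
    rw [Finset.sum_mul]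
    refine Finset.sum_le_sum fun i _ => ?_
    have hcs := Finset.sum_mul_sq_le_sq_mul_sq Finset.univ (fun j => (C ^ k) i j) x
    calc ((C ^ k).mulVec x i) * ((C ^ k).mulVec x i)
        = (∑ j, (C ^ k) i j * x j) ^ 2 := by rw [sq]; rfl
    _ ≤ (∑ j, ((C ^ k) i j) ^ 2) * ∑ j, x j ^ 2 := hcs
  set Λ : ℝ := L * n + 1 with hΛ
  have hΛ1 : 1 ≤ Λ := by
    rw [hΛ]; nlinarith [hLnn, Nat.cast_nonneg (α := ℝ) n]
  have hΛpos : 0 < Λ := lt_of_lt_of_le one_pos hΛ1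
  have hup : ∀ x, bil x x ≤ Λ * ‖x‖ ^ 2 := by
    intro x
    calc bil x x ≤ L * ∑ i, x i ^ 2 := hup0 x
    _ ≤ L * (n * ‖x‖ ^ 2) := by
        exact mul_le_mul_of_nonneg_left (sum_sq_le_pi_norm_sq x) hLnn
    _ ≤ Λ * ‖x‖ ^ 2 := by rw [hΛ]; nlinarith [sq_nonneg ‖x‖]
  -- key coercivity: 2*h*bil x (B.mulVec x) ≥ (1 - r^2) * ∑ x i ^2
  have hcoerc : ∀ x, (1 - r ^ 2) * (∑ i, x i ^ 2) ≤ 2 * h * bil x (B.mulVec x) := by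
    intro x
    -- telescope
    have htele : bil (C.mulVec x) (C.mulVec x)
        = bil x x - (∑ i, x i ^ 2) + ∑ i, ((C ^ k₀).mulVec x i) ^ 2 := by
      have hstep : ∀ k : ℕ, (C ^ k).mulVec (C.mulVec x) = (C ^ (k + 1)).mulVec x := by
        intro k
        rw [Matrix.mulVec_mulVec, ← pow_succ]
      have h1 : bil (C.mulVec x) (C.mulVec x)
          = ∑ k ∈ Finset.range k₀, ∑ i, ((C ^ (k+1)).mulVec x i) * ((C ^ (k+1)).mulVec x i) := by
        rw [hbil]
        refine Finset.sum_congr rfl fun k _ => ?_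
        rw [hstep k]
      rw [h1]
      have h2 := Finset.sum_range_succ' (fun k => ∑ i, ((C ^ k).mulVec x i) * ((C ^ k).mulVec x i)) k₀
      have h3 := Finset.sum_range_succ (fun k => ∑ i, ((C ^ k).mulVec x i) * ((C ^ k).mulVec x i)) k₀
      have h4 : ∑ i, ((C ^ 0).mulVec x i) * ((C ^ 0).mulVec x i) = ∑ i, x i ^ 2 := by
        simp [pow_zero, Matrix.one_mulVec, sq]
      have h5 : ∑ i, ((C ^ k₀).mulVec x i) * ((C ^ k₀).mulVec x i)
          = ∑ i, ((C ^ k₀).mulVec x i) ^ 2 := by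
        exact Finset.sum_congr rfl fun i _ => (sq _).symm
      rw [h3, h4, h5] at h2
      simp only [hbil]
      linarith [h2]
    -- expansion
    have hCx : C.mulVec x = x - h • (B.mulVec x) := by
      rw [hC, Matrix.sub_mulVec, Matrix.one_mulVec, Matrix.smul_mulVec]
    have hexp : bil (C.mulVec x) (C.mulVec x)
        = bil x x - 2 * h * bil x (B.mulVec x) + h ^ 2 * bil (B.mulVec x) (B.mulVec x) := by
      rw [hCx, hbil]
      simp only [Matrix.mulVec_sub, Matrix.mulVec_smul, Pi.sub_apply, Pi.smul_apply,
        smul_eq_mul]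
      rw [Finset.mul_sum, Finset.mul_sum, ← Finset.sum_sub_distrib, ← Finset.sum_add_distrib]
      refine Finset.sum_congr rfl fun k _ => ?_
      rw [Finset.mul_sum, Finset.mul_sum, ← Finset.sum_sub_distrib, ← Finset.sum_add_distrib]
      exact Finset.sum_congr rfl fun i _ => by ring
    have hkx := hkey x
    have hq2 : 0 ≤ bil (B.mulVec x) (B.mulVec x) := hposq _
    nlinarith [htele, hexp, hkx]
  -- mixed term bound
  have hmix : ∀ (s : ℝ) (x g : Fin n → ℝ),
      0 ≤ s ^ 2 * bil x x + 2 * s * bil x g + bil g g := by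
    intro s x g
    have h0 : 0 ≤ ∑ k ∈ Finset.range k₀, ∑ i,
        (s * ((C ^ k).mulVec x i) + ((C ^ k).mulVec g i)) ^ 2 :=
      Finset.sum_nonneg fun k _ => Finset.sum_nonneg fun i _ => sq_nonneg _
    have hexpand : ∑ k ∈ Finset.range k₀, ∑ i,
        (s * ((C ^ k).mulVec x i) + ((C ^ k).mulVec g i)) ^ 2
        = s ^ 2 * bil x x + 2 * s * bil x g + bil g g := by
      simp only [hbil]
      rw [Finset.mul_sum, Finset.mul_sum, ← Finset.sum_add_distrib, ← Finset.sum_add_distrib]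
      refine Finset.sum_congr rfl fun k _ => ?_
      rw [Finset.mul_sum, Finset.mul_sum, ← Finset.sum_add_distrib, ← Finset.sum_add_distrib]
      exact Finset.sum_congr rfl fun i _ => by ring
    linarith [hexpand ▸ h0]
  -- derivative fact
  have hderiv : ∀ (ψ : ℝ → (Fin n → ℝ)) (d : Fin n → ℝ) (t : ℝ), HasDerivAt ψ d t →
      HasDerivAt (fun s => bil (ψ s) (ψ s)) (2 * bil (ψ t) d) t := by
    intro ψ d t hψ
    have hcomp : ∀ (k : ℕ) (i : Fin n),
        HasDerivAt (fun s => (C ^ k).mulVec (ψ s) i) ((C ^ k).mulVec d i) t := by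
      intro k i
      have h1 : ∀ j, HasDerivAt (fun s => ψ s j) (d j) t := hasDerivAt_pi.mp hψ
      have h2 : HasDerivAt (fun s => ∑ j, (C ^ k) i j * ψ s j) (∑ j, (C ^ k) i j * d j) t :=
        HasDerivAt.fun_sum fun j _ => (h1 j).const_mul _
      simpa [Matrix.mulVec, dotProduct] using h2
    have hmain : HasDerivAt (fun s => bil (ψ s) (ψ s))
        (∑ k ∈ Finset.range k₀, ∑ i, ((C ^ k).mulVec d i * (C ^ k).mulVec (ψ t) i
          + (C ^ k).mulVec (ψ t) i * (C ^ k).mulVec d i)) t := by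
      have : HasDerivAt (fun s => ∑ k ∈ Finset.range k₀, ∑ i,
          ((C ^ k).mulVec (ψ s) i) * ((C ^ k).mulVec (ψ s) i))
          (∑ k ∈ Finset.range k₀, ∑ i, ((C ^ k).mulVec d i * (C ^ k).mulVec (ψ t) i
          + (C ^ k).mulVec (ψ t) i * (C ^ k).mulVec d i)) t :=
        HasDerivAt.fun_sum fun k _ => HasDerivAt.fun_sum fun i _ => (hcomp k i).mul (hcomp k i)
      exact this
    convert hmain using 1
    simp only [hbil]
    rw [Finset.mul_sum]
    refine Finset.sum_congr rfl fun k _ => ?_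
    rw [Finset.mul_sum]
    exact Finset.sum_congr rfl fun i _ => by ring
  -- constants
  set c₀ : ℝ := (1 - r ^ 2) / h with hc₀
  have hc₀pos : 0 < c₀ := by
    rw [hc₀]; apply div_pos; nlinarith; exact hh
  have hcoerc' : ∀ x, c₀ * ∑ i, x i ^ 2 ≤ 2 * bil x (B.mulVec x) := by
    intro x
    have := hcoerc x
    rw [hc₀, div_mul_eq_mul_div, div_le_iff₀ hh]
    linarith [this]
  set s : ℝ := c₀ / (2 * Λ) with hs
  have hspos : 0 < s := by rw [hs]; positivity
  set ε : ℝ := Real.sqrt (c₀ * s / (4 * Λ)) with hε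
  have hεpos : 0 < ε := by rw [hε]; positivity
  have hε2 : Λ * ε ^ 2 / s = c₀ / 4 := by
    rw [hε, Real.sq_sqrt (by positivity)]
    field_simp
  refine ⟨bil, c₀ / (4 * Λ), ε, by positivity, hεpos, hposq, hlow, ?_, hderiv⟩
  intro x g hg
  have e1 : c₀ * ‖x‖ ^ 2 ≤ 2 * bil x (B.mulVec x) := by
    have := hcoerc' x
    have h2 := pi_norm_sq_le_sum_sq x
    nlinarith [hc₀pos]
  have e2 : 0 ≤ s ^ 2 * bil x x + 2 * s * bil x g + bil g g := hmix s x g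
  have e3 : bil x x ≤ Λ * ‖x‖ ^ 2 := hup x
  have e4 : bil g g ≤ Λ * (ε ^ 2 * ‖x‖ ^ 2) := by
    calc bil g g ≤ Λ * ‖g‖ ^ 2 := hup g
    _ ≤ Λ * (ε ^ 2 * ‖x‖ ^ 2) := by
        have : ‖g‖ ^ 2 ≤ ε ^ 2 * ‖x‖ ^ 2 := by
          have := pow_le_pow_left₀ (norm_nonneg g) hg 2
          calc ‖g‖ ^ 2 ≤ (ε * ‖x‖) ^ 2 := this
          _ = ε ^ 2 * ‖x‖ ^ 2 := by ring
        exact mul_le_mul_of_nonneg_left this hΛpos.le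
  -- 2 * bil x g ≥ -(s * bil x x + bil g g / s)
  have e5 : -(s * bil x x + bil g g / s) ≤ 2 * bil x g := by
    rw [neg_le, ← sub_nonneg]
    have h2 : 0 ≤ (s ^ 2 * bil x x + 2 * s * bil x g + bil g g) / s := by positivity
    rw [le_div_iff₀ hspos] at h2
    have h3 : bil g g / s * s = bil g g := div_mul_cancel₀ _ hspos.ne'
    nlinarith [h2, hspos]
  have hsplit : bil x (B.mulVec x + g) = bil x (B.mulVec x) + bil x g := hadd x _ g
  rw [hsplit]
  -- combine
  have e6 : s * Λ = c₀ / 2 := by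
    rw [hs]; field_simp
  have e7 : Λ * ε ^ 2 = s * (c₀ / 4) := by
    rw [← hε2]; field_simp
  have e8 : bil x x / Λ ≤ ‖x‖ ^ 2 := by
    rw [div_le_iff₀ hΛpos]; linarith [e3]
  -- goal : c₀/(4Λ) * bil x x ≤ 2 * (bil x (B.mulVec x) + bil x g)
  have e9 : c₀ / (4 * Λ) * bil x x ≤ c₀ / 4 * ‖x‖ ^ 2 := by
    rw [div_mul_eq_mul_div, div_le_iff₀ (by positivity)]
    have := e8
    rw [div_le_iff₀ hΛpos] at this
    calc c₀ * bil x x ≤ c₀ * (‖x‖ ^ 2 * Λ) := by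
          exact mul_le_mul_of_nonneg_left this hc₀pos.le
    _ = c₀ / 4 * ‖x‖ ^ 2 * (4 * Λ) := by ring
  have e10 : bil g g / s ≤ c₀ / 4 * ‖x‖ ^ 2 := by
    rw [div_le_iff₀ hspos]
    calc bil g g ≤ Λ * (ε ^ 2 * ‖x‖ ^ 2) := e4
    _ = c₀ / 4 * ‖x‖ ^ 2 * s := by rw [← mul_assoc, e7]; ring
  have e11 : s * bil x x ≤ c₀ / 2 * ‖x‖ ^ 2 := by
    calc s * bil x x ≤ s * (Λ * ‖x‖ ^ 2) := mul_le_mul_of_nonneg_left e3 hspos.le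
    _ = c₀ / 2 * ‖x‖ ^ 2 := by rw [← mul_assoc, e6]
  linarith [e1, e5, e9, e10, e11]


lemma flat_bound {n : ℕ} {U : Set (Fin n → ℝ)} (hU : IsOpen U) (m : ℕ) :
    ∀ {W : Type*} [NormedAddCommGroup W] [NormedSpace ℝ W]
      (g : (Fin n → ℝ) → W), ContDiffOn ℝ (⊤ : ℕ∞) g U →
      (∀ k, k ≤ m → iteratedFDeriv ℝ k g 0 = 0) →
      ∀ δ : ℝ, closedBall 0 δ ⊆ U →
      ∃ Cm : ℝ, 0 ≤ Cm ∧ ∀ x ∈ closedBall (0 : Fin n → ℝ) δ, ‖g x‖ ≤ Cm * ‖x‖ ^ m := by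
  induction m with
  | zero =>
    intro W _ _ g hg _ δ hδU
    obtain ⟨Cb, hCb⟩ := (isCompact_closedBall (0 : Fin n → ℝ) δ).exists_bound_of_continuousOn
      ((hg.continuousOn).mono hδU)
    exact ⟨max Cb 0, le_max_right _ _, fun x hx => by
      rw [pow_zero, mul_one]; exact (hCb x hx).trans (le_max_left _ _)⟩
  | succ m ih =>
    intro W _ _ g hg hvan δ hδU
    -- derivative is flat up to order m
    have hg' : ContDiffOn ℝ (⊤ : ℕ∞) (fderiv ℝ g) U := hg.fderiv_of_isOpen hU (by simp)
    have hvan' : ∀ k, k ≤ m → iteratedFDeriv ℝ k (fderiv ℝ g) 0 = 0 := by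
      intro k hk
      ext v u
      have h1 := iteratedFDeriv_succ_apply_right (𝕜 := ℝ) (f := g) (x := 0)
        (Fin.snoc v u)
      rw [Fin.init_snoc, Fin.snoc_last] at h1
      rw [← h1, hvan (k + 1) (by omega)]
      simp
    obtain ⟨C, hC0, hC⟩ := ih (fderiv ℝ g) hg' hvan' δ hδU
    refine ⟨C, hC0, fun x hx => ?_⟩
    rw [mem_closedBall, dist_zero_right] at hx
    have hg0 : g 0 = 0 := by
      have h0 := hvan 0 (by omega)
      have := norm_iteratedFDeriv_zero (𝕜 := ℝ) (f := g) (x := (0 : Fin n → ℝ))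
      rw [h0, norm_zero] at this
      exact (norm_eq_zero.mp this.symm)
    have hmem : ∀ t : ℝ, t ∈ Icc (0:ℝ) 1 → t • x ∈ closedBall (0 : Fin n → ℝ) δ := by
      intro t ht
      rw [mem_closedBall, dist_zero_right, norm_smul]
      have h1 : ‖t‖ ≤ 1 := by
        rw [Real.norm_eq_abs, abs_le]; exact ⟨by linarith [ht.1], ht.2⟩
      calc ‖t‖ * ‖x‖ ≤ 1 * ‖x‖ := mul_le_mul_of_nonneg_right h1 (norm_nonneg x)
      _ = ‖x‖ := one_mul _
      _ ≤ δ := hx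
    have hdiff : ∀ t : ℝ, t ∈ Icc (0:ℝ) 1 →
        HasDerivAt (fun s : ℝ => g (s • x)) (fderiv ℝ g (t • x) x) t := by
      intro t ht
      have hU' : t • x ∈ U := hδU (hmem t ht)
      have hgd : DifferentiableAt ℝ g (t • x) :=
        ((hg.differentiableOn (by simp)).differentiableAt (hU.mem_nhds hU'))
      have hline : HasDerivAt (fun s : ℝ => s • x) ((1:ℝ) • x) t :=
        (hasDerivAt_id t).smul_const x
      have := hgd.hasFDerivAt.comp_hasDerivAt t hline
      simpa [Function.comp_def] using this
    -- comparison function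
    set K : ℝ := C * ‖x‖ ^ (m + 1) / (m + 1) with hK
    have hKnn : 0 ≤ K := by positivity
    have hBd : ∀ t : ℝ, HasDerivAt (fun s : ℝ => K * s ^ (m + 1))
        (K * ((m + 1) * t ^ m)) t := by
      intro t
      simpa using (hasDerivAt_pow (m + 1) t).const_mul K
    have hbound : ∀ t ∈ Ico (0:ℝ) 1, ‖fderiv ℝ g (t • x) x‖ ≤ K * ((m + 1) * t ^ m) := by
      intro t ht
      have htI : t ∈ Icc (0:ℝ) 1 := ⟨ht.1, ht.2.le⟩
      have h1 : ‖fderiv ℝ g (t • x)‖ ≤ C * ‖t • x‖ ^ m := hC (t • x) (hmem t htI)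
      calc ‖fderiv ℝ g (t • x) x‖ ≤ ‖fderiv ℝ g (t • x)‖ * ‖x‖ :=
            (fderiv ℝ g (t • x)).le_opNorm x
      _ ≤ C * ‖t • x‖ ^ m * ‖x‖ := mul_le_mul_of_nonneg_right h1 (norm_nonneg x)
      _ = C * (t ^ m * ‖x‖ ^ m) * ‖x‖ := by
          rw [norm_smul, mul_pow, Real.norm_eq_abs, abs_of_nonneg ht.1]
      _ = K * ((m + 1) * t ^ m) := by
          rw [hK]; field_simp; ring
    have hcont : ContinuousOn (fun s : ℝ => g (s • x)) (Icc (0:ℝ) 1) := by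
      intro t ht
      exact ((hdiff t ht).continuousAt).continuousWithinAt
    have happ := image_norm_le_of_norm_deriv_right_le_deriv_boundary
      (f := fun s : ℝ => g (s • x)) (f' := fun t => fderiv ℝ g (t • x) x)
      (a := 0) (b := 1) hcont
      (fun t ht => (hdiff t ⟨ht.1, ht.2.le⟩).hasDerivWithinAt)
      (B := fun s => K * s ^ (m + 1)) (B' := fun t => K * ((m + 1) * t ^ m))
      (by simp [hg0]) hBd hbound
    have h1 := happ (right_mem_Icc.mpr zero_le_one)
    simp only [one_smul, one_pow, mul_one] at h1
    calc ‖g x‖ ≤ K := h1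
    _ ≤ C * ‖x‖ ^ (m + 1) := by
        rw [hK, div_le_iff₀ (by positivity)]
        nlinarith [mul_nonneg hC0 (pow_nonneg (norm_nonneg x) (m+1))]

/-- No nontrivial flat solutions: if `X` is a smooth vector field on open `U ⊆ ℝⁿ` with a
strictly positive source at `0`, `U` star-shaped with respect to `X`, `A : U → End(V)`
smooth, and `w : U → V` is a smooth solution of `D_X w + A·w = 0` that is flat at `0`,
then `w ≡ 0` on `U`. -/
theorem stmt9 {n : ℕ} {V : Type*} [NormedAddCommGroup V] [NormedSpace ℝ V]
    [FiniteDimensional ℝ V]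
    (X : (Fin n → ℝ) → (Fin n → ℝ)) (U : Set (Fin n → ℝ))
    (hU : IsOpen U) (h0U : (0 : Fin n → ℝ) ∈ U)
    (hX : ContDiffOn ℝ (⊤ : ℕ∞) X U) (hX0 : X 0 = 0)
    (B : Matrix (Fin n) (Fin n) ℝ)
    (hB : HasFDerivAt X (LinearMap.toContinuousLinearMap B.mulVecLin) 0)
    (hpos : ∀ μ ∈ spectrum ℂ (B.map (Complex.ofReal ·)), 0 < μ.re)
    (Φ : ℝ → (Fin n → ℝ) → (Fin n → ℝ))
    (hΦ0 : ∀ y ∈ U, Φ 0 y = y)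
    (hΦd : ∀ y ∈ U, ∀ t ≤ (0:ℝ), HasDerivAt (fun s => Φ s y) (X (Φ t y)) t)
    (hΦU : ∀ y ∈ U, ∀ t ≤ (0:ℝ), Φ t y ∈ U)
    (hΦlim : ∀ y ∈ U, Filter.Tendsto (fun t => Φ t y) Filter.atBot (nhds 0))
    (A : (Fin n → ℝ) → (V →L[ℝ] V)) (hA : ContDiffOn ℝ (⊤ : ℕ∞) A U)
    (w : (Fin n → ℝ) → V) (hw : ContDiffOn ℝ (⊤ : ℕ∞) w U)
    (heq : ∀ y ∈ U, fderivWithin ℝ w U y (X y) + A y (w y) = 0)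
    (hflat : ∀ k : ℕ, iteratedFDerivWithin ℝ k w U 0 = 0) :
    ∀ y ∈ U, w y = 0 := by
  intro y hyU
  obtain ⟨bil, c, ε, hc, hε, hq0, hqlow, hqkey, hqderiv⟩ := lyapunov B hpos
  -- a closed ball inside U
  obtain ⟨δ₀, hδ₀pos, hδ₀U⟩ : ∃ δ > (0:ℝ), closedBall (0 : Fin n → ℝ) δ ⊆ U := by
    rcases Metric.isOpen_iff.mp hU 0 h0U with ⟨δ, hδ, hball⟩
    exact ⟨δ/2, by linarith, (closedBall_subset_ball (by linarith)).trans hball⟩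
  -- little-o estimate for X near 0
  obtain ⟨δ₁, hδ₁pos, hδ₁⟩ : ∃ δ₁ > (0:ℝ), ∀ z : Fin n → ℝ, ‖z‖ ≤ δ₁ →
      ‖X z - B.mulVec z‖ ≤ ε * ‖z‖ := by
    have h1 := hB.isLittleO
    simp only [hX0, sub_zero] at h1
    have h2 := h1.def hε
    rw [Metric.eventually_nhds_iff] at h2
    obtain ⟨δ, hδpos, hδ⟩ := h2
    refine ⟨δ/2, by linarith, fun z hz => ?_⟩
    have := hδ (show dist z 0 < δ by rw [dist_zero_right]; linarith)
    simpa [Matrix.mulVecLin_apply] using this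
  set δ₂ : ℝ := min δ₀ δ₁ with hδ₂
  have hδ₂pos : 0 < δ₂ := lt_min hδ₀pos hδ₁pos
  have hδ₂U : closedBall (0 : Fin n → ℝ) δ₂ ⊆ U :=
    (closedBall_subset_closedBall (min_le_left _ _)).trans hδ₀U
  -- the trajectory
  set ψ : ℝ → (Fin n → ℝ) := fun t => Φ t y with hψ
  have hψU : ∀ t ≤ (0:ℝ), ψ t ∈ U := fun t ht => hΦU y hyU t ht
  have hψd : ∀ t ≤ (0:ℝ), HasDerivAt ψ (X (ψ t)) t := fun t ht => hΦd y hyU t ht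
  -- eventually small
  obtain ⟨T₁, hT₁⟩ : ∃ T₁ : ℝ, ∀ t ≤ T₁, ψ t ∈ closedBall (0 : Fin n → ℝ) δ₂ := by
    have h1 : ∀ᶠ t in atBot, ψ t ∈ closedBall (0 : Fin n → ℝ) δ₂ :=
      (hΦlim y hyU) (Metric.closedBall_mem_nhds 0 hδ₂pos)
    exact eventually_atBot.mp h1
  set T₀ : ℝ := min T₁ 0 with hT₀
  have hT₀0 : T₀ ≤ 0 := min_le_right _ _
  have hψsmall : ∀ t ≤ T₀, ‖ψ t‖ ≤ δ₂ := by
    intro t ht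
    have := hT₁ t (le_trans ht (min_le_left _ _))
    rwa [mem_closedBall, dist_zero_right] at this
  -- Lyapunov function along the flow
  set f : ℝ → ℝ := fun t => bil (ψ t) (ψ t) with hf
  have hfd : ∀ t ≤ (0:ℝ), HasDerivAt f (2 * bil (ψ t) (X (ψ t))) t :=
    fun t ht => hqderiv ψ (X (ψ t)) t (hψd t ht)
  have hflow : ∀ t ≤ T₀, c * f t ≤ 2 * bil (ψ t) (X (ψ t)) := by
    intro t ht
    have hsm : ‖ψ t‖ ≤ δ₂ := hψsmall t ht
    have hg : ‖X (ψ t) - B.mulVec (ψ t)‖ ≤ ε * ‖ψ t‖ :=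
      hδ₁ (ψ t) (le_trans hsm (min_le_right _ _))
    have := hqkey (ψ t) (X (ψ t) - B.mulVec (ψ t)) hg
    rwa [add_sub_cancel] at this
  -- monotone comparison: f t ≤ f T₀ * exp (c * (t - T₀)) for t ≤ T₀
  set gfun : ℝ → ℝ := fun t => f t * Real.exp (-c * t) with hgfun
  have hgd : ∀ t ≤ (0:ℝ), HasDerivAt gfun
      ((2 * bil (ψ t) (X (ψ t))) * Real.exp (-c * t) + f t * (-c * Real.exp (-c * t))) t := by
    intro t ht
    have h1 : HasDerivAt (fun s => Real.exp (-c * s)) (-c * Real.exp (-c * t)) t := by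
      have hlin : HasDerivAt (fun s : ℝ => -c * s) (-c) t := by
        simpa using (hasDerivAt_id t).const_mul (-c)
      simpa [mul_comm] using hlin.exp
    exact (hfd t ht).mul h1
  have hmono : MonotoneOn gfun (Iic T₀) := by
    apply monotoneOn_of_deriv_nonneg (convex_Iic T₀)
    · intro t ht
      exact ((hgd t (le_trans ht hT₀0)).continuousAt).continuousWithinAt
    · intro t ht
      rw [interior_Iic] at ht
      exact ((hgd t (le_of_lt (lt_of_lt_of_le ht hT₀0))).differentiableAt).differentiableWithinAt
    · intro t ht
      rw [interior_Iic] at ht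
      have ht' : t ≤ T₀ := le_of_lt ht
      rw [(hgd t (le_trans ht' hT₀0)).deriv]
      have h1 := hflow t ht'
      have h2 : 0 < Real.exp (-c * t) := Real.exp_pos _
      nlinarith [h1, h2]
  have hdecay : ∀ t ≤ T₀, f t ≤ (f T₀ * Real.exp (-c * T₀)) * Real.exp (c * t) := by
    intro t ht
    have h1 := hmono (mem_Iic.mpr ht) (mem_Iic.mpr (le_refl T₀)) ht
    rw [hgfun] at h1
    have h3 : f t * Real.exp (-c * t) * Real.exp (c * t)
        ≤ (f T₀ * Real.exp (-c * T₀)) * Real.exp (c * t) :=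
      mul_le_mul_of_nonneg_right h1 (Real.exp_pos _).le
    have h4 : -c * t + c * t = 0 := by ring
    rwa [mul_assoc, ← Real.exp_add, h4, Real.exp_zero, mul_one] at h3
  -- norm decay
  set D2 : ℝ := f T₀ * Real.exp (-c * T₀) with hD2
  have hD2nn : 0 ≤ D2 := mul_nonneg (hq0 _) (Real.exp_pos _).le
  set D : ℝ := Real.sqrt D2 with hD
  have hDnn : 0 ≤ D := Real.sqrt_nonneg _
  have hnormdecay : ∀ t ≤ T₀, ‖ψ t‖ ≤ D * Real.exp (c / 2 * t) := by
    intro t ht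
    have h1 : ‖ψ t‖ ^ 2 ≤ D2 * Real.exp (c * t) := le_trans (hqlow (ψ t)) (hdecay t ht)
    have h2 : (D * Real.exp (c / 2 * t)) ^ 2 = D2 * Real.exp (c * t) := by
      have harg : c / 2 * t + c / 2 * t = c * t := by ring
      rw [mul_pow, Real.sq_sqrt hD2nn, sq, ← Real.exp_add, harg]
    have h3 := Real.sqrt_le_sqrt (h2 ▸ h1)
    rwa [Real.sqrt_sq (norm_nonneg _), Real.sqrt_sq (by positivity)] at h3
  -- bound for A along relevant region
  obtain ⟨M₁, hM₁⟩ := (isCompact_closedBall (0 : Fin n → ℝ) δ₂).exists_bound_of_continuousOn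
    ((hA.continuousOn).mono hδ₂U)
  have hψcont : ContinuousOn ψ (Icc T₀ 0) := fun t ht =>
    ((hψd t ht.2).continuousAt).continuousWithinAt
  have hK₂cpt : IsCompact (ψ '' Icc T₀ 0) := (isCompact_Icc).image_of_continuousOn hψcont
  have hK₂U : ψ '' Icc T₀ 0 ⊆ U := by rintro _ ⟨t, ht, rfl⟩; exact hψU t ht.2
  obtain ⟨M₂, hM₂⟩ := hK₂cpt.exists_bound_of_continuousOn ((hA.continuousOn).mono hK₂U)
  set M : ℝ := max M₁ M₂ + 1 with hM
  have hM₁0 : 0 ≤ M₁ :=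
    le_trans (norm_nonneg _) (hM₁ 0 (mem_closedBall_self hδ₂pos.le))
  have hMpos : 0 < M := by
    have := le_max_left M₁ M₂
    rw [hM]; linarith
  have hAb : ∀ s ≤ (0:ℝ), ‖A (ψ s)‖ ≤ M := by
    intro s hs
    rcases le_or_gt s T₀ with hsT | hsT
    · have hmem : ψ s ∈ closedBall (0 : Fin n → ℝ) δ₂ := by
        rw [mem_closedBall, dist_zero_right]; exact hψsmall s hsT
      have h1 := hM₁ _ hmem
      have h2 := le_max_left M₁ M₂
      rw [hM]; linarith
    · have hmem : ψ s ∈ ψ '' Icc T₀ 0 := ⟨s, ⟨hsT.le, hs⟩, rfl⟩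
      have h1 := hM₂ _ hmem
      have h2 := le_max_right M₁ M₂
      rw [hM]; linarith
  -- flatness bound
  have hflat' : ∀ k : ℕ, iteratedFDeriv ℝ k w 0 = 0 := by
    intro k
    have e := iteratedFDerivWithin_of_isOpen (𝕜 := ℝ) (f := w) (s := U) k hU h0U
    rw [← e]; exact hflat k
  set m : ℕ := ⌈2 * (M + 1) / c⌉₊ with hm
  have hmlb : M + 1 ≤ (m : ℝ) * (c / 2) := by
    have h1 : 2 * (M + 1) / c ≤ (m : ℝ) := Nat.le_ceil _
    have h2 : 2 * (M + 1) / c * (c / 2) ≤ (m : ℝ) * (c / 2) :=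
      mul_le_mul_of_nonneg_right h1 (by positivity)
    calc M + 1 = 2 * (M + 1) / c * (c / 2) := by field_simp
    _ ≤ _ := h2
  obtain ⟨Cm, hCm0, hCm⟩ := flat_bound hU m w hw (fun k _ => hflat' k) δ₂ hδ₂U
  -- the solution along the flow
  set v : ℝ → V := fun t => w (ψ t) with hv
  have hvd : ∀ t ≤ (0:ℝ), HasDerivAt v (-(A (ψ t) (v t))) t := by
    intro t ht
    have hmem : ψ t ∈ U := hψU t ht
    have hwd : DifferentiableAt ℝ w (ψ t) :=
      (hw.differentiableOn (by simp)).differentiableAt (hU.mem_nhds hmem)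
    have hchain := (hwd.hasFDerivAt).comp_hasDerivAt t (hψd t ht)
    have heval : fderiv ℝ w (ψ t) (X (ψ t)) = -(A (ψ t) (v t)) := by
      have h1 := heq (ψ t) hmem
      rw [fderivWithin_of_isOpen hU hmem] at h1
      exact eq_neg_of_add_eq_zero_left h1
    rw [← heval]; exact hchain
  have hv0 : v 0 = w y := by rw [hv]; simp only [hψ]; rw [hΦ0 y hyU]
  -- Gronwall estimate
  have hgron : ∀ t ≤ T₀, ‖w y‖ ≤ ‖v t‖ * Real.exp (M * (0 - t)) := by
    intro t ht
    have ht0 : t ≤ 0 := le_trans ht hT₀0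
    have hcont : ContinuousOn v (Icc t 0) := fun s hs =>
      ((hvd s hs.2).continuousAt).continuousWithinAt
    have hder : ∀ s ∈ Ico t 0, HasDerivWithinAt v (-(A (ψ s) (v s))) (Ici s) s :=
      fun s hs => ((hvd s hs.2.le).hasDerivWithinAt)
    have hbound : ∀ s ∈ Ico t 0, ‖-(A (ψ s) (v s))‖ ≤ M * ‖v s‖ + 0 := by
      intro s hs
      rw [norm_neg, add_zero]
      calc ‖A (ψ s) (v s)‖ ≤ ‖A (ψ s)‖ * ‖v s‖ := (A (ψ s)).le_opNorm (v s)
      _ ≤ M * ‖v s‖ := mul_le_mul_of_nonneg_right (hAb s hs.2.le) (norm_nonneg _)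
    have hgw := norm_le_gronwallBound_of_norm_deriv_right_le hcont hder
      (le_refl ‖v t‖) hbound 0 (right_mem_Icc.mpr ht0)
    rw [gronwallBound_ε0] at hgw
    rwa [hv0] at hgw
  -- final estimate
  have hfinal : ∀ t ≤ T₀, ‖w y‖ ≤ (Cm * D ^ m) * Real.exp (((m : ℝ) * (c / 2) - M) * t) := by
    intro t ht
    have h1 := hgron t ht
    have h2 : ‖v t‖ ≤ Cm * ‖ψ t‖ ^ m := by
      apply hCm
      rw [mem_closedBall, dist_zero_right]; exact hψsmall t ht
    have h3 : ‖ψ t‖ ^ m ≤ (D * Real.exp (c / 2 * t)) ^ m :=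
      pow_le_pow_left₀ (norm_nonneg _) (hnormdecay t ht) m
    have h5 : (D * Real.exp (c / 2 * t)) ^ m = D ^ m * Real.exp ((m : ℝ) * (c / 2 * t)) := by
      rw [mul_pow, ← Real.exp_nat_mul]
    have harg : (m : ℝ) * (c / 2 * t) + M * (0 - t) = ((m : ℝ) * (c / 2) - M) * t := by ring
    calc ‖w y‖ ≤ ‖v t‖ * Real.exp (M * (0 - t)) := h1
    _ ≤ (Cm * (D ^ m * Real.exp ((m : ℝ) * (c / 2 * t)))) * Real.exp (M * (0 - t)) := by
        apply mul_le_mul_of_nonneg_right _ (Real.exp_pos _).le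
        calc ‖v t‖ ≤ Cm * ‖ψ t‖ ^ m := h2
        _ ≤ Cm * (D * Real.exp (c / 2 * t)) ^ m := mul_le_mul_of_nonneg_left h3 hCm0
        _ = Cm * (D ^ m * Real.exp ((m : ℝ) * (c / 2 * t))) := by rw [h5]
    _ = (Cm * D ^ m) * (Real.exp ((m : ℝ) * (c / 2 * t)) * Real.exp (M * (0 - t))) := by
        ring
    _ = (Cm * D ^ m) * Real.exp (((m : ℝ) * (c / 2) - M) * t) := by
        rw [← Real.exp_add, harg]
  -- conclusion by limit
  have hapos : (0:ℝ) < (m : ℝ) * (c / 2) - M := by linarith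
  have htend : Tendsto (fun t : ℝ => (Cm * D ^ m) * Real.exp (((m : ℝ) * (c / 2) - M) * t))
      atBot (nhds 0) := by
    have h1 : Tendsto (fun t : ℝ => ((m : ℝ) * (c / 2) - M) * t) atBot atBot :=
      Tendsto.const_mul_atBot hapos tendsto_id
    have h2 := Real.tendsto_exp_atBot.comp h1
    have h3 := h2.const_mul (Cm * D ^ m)
    simpa using h3
  have hle : ∀ᶠ t in atBot, ‖w y‖ ≤ (Cm * D ^ m) * Real.exp (((m : ℝ) * (c / 2) - M) * t) :=
    eventually_atBot.mpr ⟨T₀, fun t ht => hfinal t ht⟩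
  have hwy : ‖w y‖ ≤ 0 := ge_of_tendsto htend hle
  exact norm_le_zero_iff.mp hwy
end
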